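/- Let $p$ be a prime, let $k = \mathbb{F}_p(t,u)$ be the field of rational functions in two variables $t, u$ over the prime field $\mathbb{F}_p$, and let $A = k[X,Y]/(Y^p - t - X - uX^p)$. Then there exists no $k$-algebra homomorphism $A \to k$; in particular, $A$ has no retraction to $k$. -/

import Mathlib

/-! If `φ` were a retraction, `x = φ X` and `y = φ Y` would satisfy `y^p = t + x + u x^p`
in `k`. The derivations `∂_t` and `∂_u` kill `p`-th powers, so `∂_t x = -1` and
`∂_u x = -x^p`. Measured by degree in `t`, the second identity forces `deg x ≤ 0`, while the
first forces `deg x ≥ 1`, since differentiation lowers the degree of a rational function.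
To stay with polynomials we write `x = F/H`, `y = G/H`; the two identities
become statements about Wronskians of `F` and `H`. -/

open TensorProduct MvPolynomial

/-- The field `k = 𝔽_p(t,u)` of rational functions in two variables `t = X 0`, `u = X 1`
over the prime field `𝔽_p = ZMod p`, realized as the fraction field of the polynomial
ring `𝔽_p[t,u]`. -/
def RatFunc2 (p : ℕ) [Fact p.Prime] : Type :=
  FractionRing (MvPolynomial (Fin 2) (ZMod p))

noncomputable instance (p : ℕ) [Fact p.Prime] : Field (RatFunc2 p) :=
  inferInstanceAs (Field (FractionRing (MvPolynomial (Fin 2) (ZMod p))))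

noncomputable instance (p : ℕ) [Fact p.Prime] :
    Algebra (MvPolynomial (Fin 2) (ZMod p)) (RatFunc2 p) :=
  inferInstanceAs
    (Algebra (MvPolynomial (Fin 2) (ZMod p)) (FractionRing (MvPolynomial (Fin 2) (ZMod p))))

/-- `k = 𝔽_p(t,u)` is indeed the field of fractions of `𝔽_p[t,u]`. -/
instance (p : ℕ) [Fact p.Prime] :
    IsFractionRing (MvPolynomial (Fin 2) (ZMod p)) (RatFunc2 p) :=
  inferInstanceAs (IsFractionRing (MvPolynomial (Fin 2) (ZMod p))
    (FractionRing (MvPolynomial (Fin 2) (ZMod p))))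

/-- The element `t` of `𝔽_p(t,u)`. -/
noncomputable abbrev tVar (p : ℕ) [Fact p.Prime] : RatFunc2 p :=
  algebraMap (MvPolynomial (Fin 2) (ZMod p)) (RatFunc2 p) (X 0)

/-- The element `u` of `𝔽_p(t,u)`. -/
noncomputable abbrev uVar (p : ℕ) [Fact p.Prime] : RatFunc2 p :=
  algebraMap (MvPolynomial (Fin 2) (ZMod p)) (RatFunc2 p) (X 1)

/-- The `k`-algebra `A = k[X,Y]/(Y^p - t - X - u·X^p)` over `k = 𝔽_p(t,u)`
(with `X = X 0`, `Y = X 1`). -/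
noncomputable abbrev AsanumaExample (p : ℕ) [Fact p.Prime] :=
  MvPolynomial (Fin 2) (RatFunc2 p) ⧸
    Ideal.span {(X 1 : MvPolynomial (Fin 2) (RatFunc2 p)) ^ p
      - C (tVar p) - X 0 - C (uVar p) * (X 0) ^ p}

namespace MvPolynomial

variable {R : Type*} [CommRing R]

theorem degreeOf_pderiv_le {σ : Type*} {i j : σ} (hij : i ≠ j) (f : MvPolynomial σ R) :
    degreeOf i (pderiv j f) ≤ degreeOf i f := by
  classical
  rw [degreeOf_le_iff]
  intro m hm
  rw [mem_support_iff, f.as_sum, map_sum, coeff_sum] at hm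
  obtain ⟨s, hs, hne⟩ := Finset.exists_ne_zero_of_sum_ne_zero hm
  rw [pderiv_monomial, coeff_monomial] at hne
  have hsm : s - Finsupp.single j 1 = m := by
    by_contra h
    simp [h] at hne
  calc m i = s i := by simp [← hsm, Finsupp.single_eq_of_ne' hij.symm]
    _ ≤ degreeOf i f := monomial_le_degreeOf i hs

theorem finSuccEquiv_pderiv_zero {n : ℕ} (f : MvPolynomial (Fin (n + 1)) R) :
    finSuccEquiv R n (pderiv 0 f) = Polynomial.derivative (finSuccEquiv R n f) := by
  induction f using MvPolynomial.induction_on with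
  | C c => simp [finSuccEquiv_apply]
  | add f g hf hg => simp [hf, hg]
  | mul_X f i hf =>
    rw [pderiv_mul, map_add, map_mul, map_mul, hf]
    rcases Fin.eq_zero_or_eq_succ i with rfl | ⟨j, rfl⟩
    · simp [finSuccEquiv_X_zero, Polynomial.derivative_mul]
    · simp [finSuccEquiv_X_succ, pderiv_X_of_ne (Fin.succ_ne_zero j), Polynomial.derivative_mul]

variable [IsDomain R]

theorem degreeOf_lt_of_wronskian_eq_sq {n : ℕ} {F H : MvPolynomial (Fin (n + 1)) R}
    (hH : H ≠ 0) (h : F * pderiv 0 H - pderiv 0 F * H = H ^ 2) :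
    degreeOf 0 H < degreeOf 0 F := by
  have hW : (finSuccEquiv R n F).wronskian (finSuccEquiv R n H) = finSuccEquiv R n H ^ 2 := by
    simpa [Polynomial.wronskian, finSuccEquiv_pderiv_zero] using congrArg (finSuccEquiv R n) h
  have hH' : finSuccEquiv R n H ≠ 0 := by simpa using hH
  have := Polynomial.natDegree_wronskian_lt_add (hW ▸ pow_ne_zero 2 hH')
  rw [hW, Polynomial.natDegree_pow] at this
  rw [← natDegree_finSuccEquiv, ← natDegree_finSuccEquiv]
  omega

theorem degreeOf_le_of_mul_pderiv_eq_pow {σ : Type*} {i j : σ} (hij : i ≠ j) (r : ℕ)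
    {F H : MvPolynomial σ R}
    (h : H ^ r * (F * pderiv j H - pderiv j F * H) = F ^ (r + 2)) :
    degreeOf i F ≤ degreeOf i H := by
  rcases eq_or_ne F 0 with rfl | hF
  · simp
  have hle := (congrArg (degreeOf i) h).symm.le
  rw [degreeOf_pow_eq i F _ hF] at hle
  have := hle.trans <| (degreeOf_mul_le i _ _).trans <| add_le_add (degreeOf_pow_le i H r) <|
    (degreeOf_sub_le i _ _).trans <| max_le
      ((degreeOf_mul_le i _ _).trans (add_le_add le_rfl (degreeOf_pderiv_le hij H)))
      ((degreeOf_mul_le i _ _).trans (add_le_add (degreeOf_pderiv_le hij F) le_rfl))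
  nlinarith

end MvPolynomial

theorem IsFractionRing.exists_asanuma_eq_of_pow_eq {R K : Type*} [CommRing R] [Nontrivial R]
    [Field K] [Algebra R K] [IsFractionRing R K] {n : ℕ} (hn : n ≠ 0) {t u : R} {x y : K}
    (h : y ^ n = algebraMap R K t + x + algebraMap R K u * x ^ n) :
    ∃ F G H : R, H ≠ 0 ∧ G ^ n = t * H ^ n + F * H ^ (n - 1) + u * F ^ n := by
  obtain ⟨⟨d, hd⟩, hdxy⟩ :=
    IsLocalization.exist_integer_multiples_of_finite (nonZeroDivisors R) ![x, y]
  obtain ⟨F, hF⟩ := hdxy 0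
  obtain ⟨G, hG⟩ := hdxy 1
  refine ⟨F, G, d, nonZeroDivisors.ne_zero hd, IsFractionRing.injective R K ?_⟩
  simp only [Matrix.cons_val_zero, Matrix.cons_val_one, Algebra.smul_def] at hF hG
  simp only [map_add, map_mul, map_pow, hF, hG]
  linear_combination algebraMap R K d ^ n * h - x * pow_sub_one_mul hn (algebraMap R K d)

theorem MvPolynomial.pow_ne_asanuma {R : Type*} [CommRing R] [IsDomain R] (p : ℕ) [Fact p.Prime]
    [CharP R p] {F G H : MvPolynomial (Fin 2) R} (hH : H ≠ 0) :
    G ^ p ≠ X 0 * H ^ p + F * H ^ (p - 1) + X 1 * F ^ p := by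
  obtain ⟨r, rfl⟩ : ∃ r, p = r + 2 :=
    ⟨p - 2, (Nat.sub_add_cancel (Fact.out : p.Prime).two_le).symm⟩
  intro h
  have hp : ((r + 2 : ℕ) : MvPolynomial (Fin 2) R) = 0 := CharP.cast_eq_zero _ _
  have hp1 : ((r + 1 : ℕ) : MvPolynomial (Fin 2) R) = -1 := by
    push_cast at hp ⊢; linear_combination hp
  have hr2 : r + 2 - 1 = r + 1 := rfl
  have hr1 : r + 1 - 1 = r := rfl
  -- `∂_t` and `∂_u` of `h`: the `p`-th powers differentiate to `0`.
  have hdt := congrArg (pderiv 0) h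
  have hdu := congrArg (pderiv 1) h
  simp only [map_add, pderiv_mul, pderiv_pow, pderiv_X_self,
    pderiv_X_of_ne (by decide : (1 : Fin 2) ≠ 0), pderiv_X_of_ne (by decide : (0 : Fin 2) ≠ 1),
    hr2, hr1, hp, hp1] at hdt hdu
  have ht : F * pderiv 0 H - pderiv 0 F * H = H ^ 2 := by
    refine (mul_right_inj' (pow_ne_zero r hH)).mp ?_
    linear_combination hdt
  have hu : H ^ r * (F * pderiv 1 H - pderiv 1 F * H) = F ^ (r + 2) := by
    linear_combination hdu
  exact (degreeOf_lt_of_wronskian_eq_sq hH ht).not_ge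
    (degreeOf_le_of_mul_pderiv_eq_pow (by decide) r hu)

/-- **Example 1, no retraction.** Let `p` be a prime, `k = 𝔽_p(t,u)` and
`A = k[X,Y]/(Y^p - t - X - u·X^p)`.  Then there is no `k`-algebra homomorphism `A → k`;
in particular, `A` has no retraction to `k`. -/
theorem asanumaExample_no_retraction (p : ℕ) [Fact p.Prime] :
    IsEmpty (AsanumaExample p →ₐ[RatFunc2 p] RatFunc2 p) := by
  refine ⟨fun φ => ?_⟩
  set ψ := φ.comp (Ideal.Quotient.mkₐ (RatFunc2 p) _)
  have hψ : ψ ((X 1 : MvPolynomial (Fin 2) (RatFunc2 p)) ^ p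
      - C (tVar p) - X 0 - C (uVar p) * (X 0) ^ p) = 0 := by
    rw [AlgHom.comp_apply, Ideal.Quotient.mkₐ_eq_mk, Ideal.Quotient.mk_singleton_self, map_zero]
  have hxy : ψ (X 1) ^ p = tVar p + ψ (X 0) + uVar p * ψ (X 0) ^ p := by
    simp only [map_sub, map_mul, map_pow, algHom_C, Algebra.algebraMap_self_apply] at hψ
    linear_combination hψ
  obtain ⟨F, G, H, hH, hFGH⟩ :=
    IsFractionRing.exists_asanuma_eq_of_pow_eq (Fact.out : p.Prime).ne_zero hxy
  exact MvPolynomial.pow_ne_asanuma p hH hFGH
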